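/- arXiv:1212.3197 — 2 statements merged into one kernel-verified Lean document; each statement's English description precedes it below -/
import Mathlib

section
/- Let ζ and φ̂ be bijections of a set S̃ such that, writing φ̂_i = ζ^i ∘ φ̂ ∘ ζ^{−i}, there is an integer m₀ ≥ 1 with φ̂_{i−m+1} ∘ ⋯ ∘ φ̂_i = φ̂_{i−m₀+1} ∘ ⋯ ∘ φ̂_i for all m > m₀ and all i (the stability hypothesis). Define φ̃ on S̃ by φ̃(s) = φ̂_{i−m₀+1} ∘ ⋯ ∘ φ̂_i (s) for s in the i-th fundamental domain. Then ζ ∘ φ̃ = φ̃ ∘ ζ. -/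
/-- The ordered composition `φ̂_{i-m+1} ∘ ⋯ ∘ φ̂_i` of the conjugates
`φ̂_j = ζ^j φ̂ ζ^{-j}` (with `φ̂_i` applied first). -/
def prodPhi {S : Type*} (ζ φ : Equiv.Perm S) : ℤ → ℕ → Equiv.Perm S
  | _, 0 => 1
  | i, (n + 1) => (ζ ^ (i - n) * φ * ζ ^ (-(i - n))) * prodPhi ζ φ i n

theorem stmt3 {S : Type*} (ζ φ : Equiv.Perm S) (m₀ : ℕ) (hm₀ : 1 ≤ m₀)
    (hstable : ∀ m : ℕ, m₀ < m → ∀ i : ℤ, prodPhi ζ φ i m = prodPhi ζ φ i m₀)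
    (ind : S → ℤ) (hind : ∀ s, ind (ζ s) = ind s + 1) :
    ∀ s : S, ζ ((fun s => prodPhi ζ φ (ind s) m₀ s) s)
      = (fun s => prodPhi ζ φ (ind s) m₀ s) (ζ s) := by
  have key : ∀ (n : ℕ) (i : ℤ), ζ * prodPhi ζ φ i n = prodPhi ζ φ (i + 1) n * ζ := by
    intro n
    induction n with
    | zero => intro i; simp [prodPhi]
    | succ n ih =>
      intro i
      show ζ * ((ζ ^ (i - n) * φ * ζ ^ (-(i - n))) * prodPhi ζ φ i n)
        = (ζ ^ (i + 1 - n) * φ * ζ ^ (-(i + 1 - n))) * prodPhi ζ φ (i + 1) n * ζ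
      have h1 : ζ ^ (i + 1 - n) = ζ * ζ ^ (i - n) := by
        rw [show i + 1 - n = 1 + (i - n) by ring, zpow_add, zpow_one]
      have h2 : ζ ^ (-(i - n)) = ζ ^ (-(i + 1 - n)) * ζ := by
        rw [show -(i - (n:ℤ)) = -(i + 1 - n) + 1 by ring, zpow_add, zpow_one]
      rw [h1, h2, mul_assoc (ζ * ζ ^ (i - n) * φ * ζ ^ (-(i + 1 - n))) (prodPhi ζ φ (i + 1) n) ζ,
        ← ih]
      group
  intro s
  simp only
  rw [hind]
  have := congrFun (congrArg (fun g : Equiv.Perm S => (g : S → S)) (key m₀ (ind s))) s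
  simpa using this
end

section
/- Let g ≥ 1 and let λ > 1 be a real root of Δ(x^g, x) = x^{2g} + x^{g+1} − 5x^g + x^{g−1} + 1. Then Θ(λ^g, λ) = −2λ^{g+1} − 2λ^{g−1} ≠ 0, and Θ((−λ)^g, −λ) = 0 if and only if g is even. -/
theorem stmt7 (g : ℕ) (hg : 1 ≤ g) (lam : ℝ) (hlam : 1 < lam)
    (hroot : lam ^ (2 * g) + lam ^ (g + 1) - 5 * lam ^ g + lam ^ (g - 1) + 1 = 0) :
    ((lam ^ g) ^ 2 - lam ^ g * (5 + lam + lam⁻¹) + 1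
        = -2 * lam ^ (g + 1) - 2 * lam ^ (g - 1)) ∧
    ((lam ^ g) ^ 2 - lam ^ g * (5 + lam + lam⁻¹) + 1 ≠ 0) ∧
    (((-lam) ^ g) ^ 2 - (-lam) ^ g * (5 + (-lam) + (-lam)⁻¹) + 1 = 0 ↔ Even g) := by
  have h0 : (0:ℝ) < lam := by linarith
  have hne : lam ≠ 0 := ne_of_gt h0
  have hgm : lam ^ (g - 1) = lam ^ g / lam := by
    rw [eq_div_iff hne, ← pow_succ, Nat.sub_add_cancel hg]
  have h2g : lam ^ (2 * g) = (lam ^ g) ^ 2 := by rw [two_mul, pow_add, sq]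
  have hg1 : lam ^ (g + 1) = lam ^ g * lam := by rw [pow_succ]
  have hroot' : (lam ^ g) ^ 2 + lam ^ g * lam - 5 * lam ^ g + lam ^ g / lam + 1 = 0 := by
    rw [← h2g, ← hg1, ← hgm]; exact hroot
  have hr2 : (lam ^ g) ^ 2 * lam + lam ^ g * lam ^ 2 - 5 * (lam ^ g * lam) + lam ^ g + lam = 0 := by
    field_simp at hroot'
    nlinarith [hroot']
  have hpg : (0:ℝ) < lam ^ g := pow_pos h0 g
  have part1 : (lam ^ g) ^ 2 - lam ^ g * (5 + lam + lam⁻¹) + 1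
      = -2 * lam ^ (g + 1) - 2 * lam ^ (g - 1) := by
    rw [hg1, hgm]
    field_simp
    nlinarith [hr2]
  refine ⟨part1, ?_, ?_⟩
  · rw [part1]
    have h1 : (0:ℝ) < lam ^ (g + 1) := pow_pos h0 _
    have h2 : (0:ℝ) < lam ^ (g - 1) := pow_pos h0 _
    nlinarith
  · constructor
    · intro h
      by_contra hodd
      have hgo : Odd g := Nat.not_even_iff_odd.mp hodd
      rw [hgo.neg_pow] at h
      have hinv : (-lam)⁻¹ = -lam⁻¹ := by rw [inv_neg]
      rw [hinv] at h
      -- h : (λ^g)^2 + λ^g(5 - λ - λ⁻¹) + 1 = 0, but this equals 2((λ^g)^2 + 1)/... > 0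
      have h' : ((- lam ^ g) ^ 2 - -lam ^ g * (5 + -lam + -lam⁻¹) + 1) * lam = 0 := by
        rw [h]; ring
      have hinv' : lam⁻¹ * lam = 1 := inv_mul_cancel₀ hne
      nlinarith [hr2, sq_nonneg (lam ^ g), hpg, h0, hinv']
    · intro heven
      rw [heven.neg_pow, inv_neg]
      field_simp
      nlinarith [hr2]
end
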